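/- Define v_n = Σ_{ν=0}^{n} ((1/4)_ν (3/4)_{n-ν} / (ν! (n-ν)!))^2 for n ≥ 0, where (x)_k denotes the Pochhammer symbol. Then for every integer n ≥ 1, the recurrence 8(n+1)^3 v_{n+1} - (2n+1)(8n^2+8n+5) v_n + 8n^3 v_{n-1} = 0 holds. -/

import Mathlib

/-!
Creative telescoping (Zeilberger's algorithm). The summand `vTerm ν (n - ν)` is hypergeometric in
both indices, so applying the recurrence operator to it termwise gives, for `ν < n`, a difference
`vCert n (ν + 1) - vCert n ν` of a rational multiple of the summand. Summing over `ν < n`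
telescopes to `vCert n n`, which cancels exactly against the terms with `ν ≥ n` that the
telescoping range leaves out.
-/

open Nat

/-- Pochhammer symbol `(x)_n = x(x+1)⋯(x+n-1)` over the rationals. -/
noncomputable def pochQ (x : ℚ) (n : ℕ) : ℚ := (ascPochhammer ℚ n).eval x

/-- The sequence `v_n`, the right-hand side of identity (7). -/
noncomputable def v (n : ℕ) : ℚ :=
  ∑ ν ∈ Finset.range (n + 1),
    (pochQ (1 / 4) ν * pochQ (3 / 4) (n - ν) / ((ν ! : ℚ) * ((n - ν)! : ℚ))) ^ 2

open Finset

noncomputable def vTerm (a b : ℕ) : ℚ :=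
  (pochQ (1 / 4) a * pochQ (3 / 4) b / ((a ! : ℚ) * (b ! : ℚ))) ^ 2

lemma v_eq_sum (n : ℕ) : v n = ∑ ν ∈ range (n + 1), vTerm ν (n - ν) := rfl

lemma pochQ_succ (x : ℚ) (m : ℕ) : pochQ x (m + 1) = pochQ x m * (x + m) := by
  simp [pochQ, ascPochhammer_succ_eval]

lemma vTerm_succ_left (a b : ℕ) :
    vTerm (a + 1) b = (((a : ℚ) + 1 / 4) / ((a : ℚ) + 1)) ^ 2 * vTerm a b := by
  simp only [vTerm, pochQ_succ, factorial_succ]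
  push_cast
  field_simp
  ring

lemma vTerm_succ_right (a b : ℕ) :
    vTerm a (b + 1) = (((b : ℚ) + 3 / 4) / ((b : ℚ) + 1)) ^ 2 * vTerm a b := by
  simp only [vTerm, pochQ_succ, factorial_succ]
  push_cast
  field_simp
  ring

noncomputable def recTerm (n ν : ℕ) : ℚ :=
  8 * ((n : ℚ) + 1) ^ 3 * vTerm ν (n + 1 - ν)
    - (2 * (n : ℚ) + 1) * (8 * (n : ℚ) ^ 2 + 8 * (n : ℚ) + 5) * vTerm ν (n - ν)
    + 8 * (n : ℚ) ^ 3 * vTerm ν (n - 1 - ν)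

/-- The certificate found by Zeilberger's algorithm. -/
noncomputable def vCert (n ν : ℕ) : ℚ :=
  (ν : ℚ) ^ 2 * (-4 * (ν : ℚ) ^ 2 + (4 * n + 5) * ν - 3 / 2 * (n + 1)) / ((n : ℚ) + 1 - ν) ^ 2
    * vTerm ν (n - ν)

lemma recTerm_eq_vCert_sub {n ν : ℕ} (h : ν < n) :
    recTerm n ν = vCert n (ν + 1) - vCert n ν := by
  obtain ⟨k, rfl⟩ : ∃ k, n = ν + k + 1 := ⟨n - 1 - ν, by omega⟩
  rw [recTerm, vCert, vCert, show ν + k + 1 + 1 - ν = k + 2 by omega,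
    show ν + k + 1 - ν = k + 1 by omega, show ν + k + 1 - 1 - ν = k by omega,
    show ν + k + 1 - (ν + 1) = k by omega, vTerm_succ_right ν (k + 1),
    vTerm_succ_right ν k, vTerm_succ_left ν k]
  push_cast
  rw [show (ν : ℚ) + k + 1 + 1 - (ν + 1) = k + 1 by ring,
    show (ν : ℚ) + k + 1 + 1 - ν = k + 2 by ring]
  field_simp
  ring

lemma sum_range_recTerm (n : ℕ) :
    ∑ ν ∈ range n, recTerm n ν = vCert n n := by
  rw [sum_congr rfl fun ν hν => recTerm_eq_vCert_sub (mem_range.1 hν), sum_range_sub]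
  simp [vCert]

lemma v_succ_eq_sum_add (n : ℕ) :
    v (n + 1) = ∑ ν ∈ range n, vTerm ν (n + 1 - ν) + vTerm n 1 + vTerm (n + 1) 0 := by
  rw [v_eq_sum, sum_range_succ, sum_range_succ, Nat.add_sub_cancel_left, Nat.sub_self]

lemma v_eq_sum_add (n : ℕ) : v n = ∑ ν ∈ range n, vTerm ν (n - ν) + vTerm n 0 := by
  rw [v_eq_sum, sum_range_succ, Nat.sub_self]

lemma mul_v_pred_eq_sum (n : ℕ) :
    (n : ℚ) ^ 3 * v (n - 1) = (n : ℚ) ^ 3 * ∑ ν ∈ range n, vTerm ν (n - 1 - ν) := by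
  cases n <;> simp [v_eq_sum]

lemma vCert_self_add_boundary (n : ℕ) :
    vCert n n + 8 * ((n : ℚ) + 1) ^ 3 * (vTerm n 1 + vTerm (n + 1) 0)
      - (2 * (n : ℚ) + 1) * (8 * (n : ℚ) ^ 2 + 8 * (n : ℚ) + 5) * vTerm n 0 = 0 := by
  rw [vCert, Nat.sub_self, vTerm_succ_right, vTerm_succ_left]
  field_simp
  ring

theorem v_recurrence_general (n : ℕ) :
    8 * ((n : ℚ) + 1) ^ 3 * v (n + 1)
      - (2 * (n : ℚ) + 1) * (8 * (n : ℚ) ^ 2 + 8 * (n : ℚ) + 5) * v n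
      + 8 * (n : ℚ) ^ 3 * v (n - 1) = 0 := by
  have htel := sum_range_recTerm n
  simp only [recTerm, sum_add_distrib, sum_sub_distrib, ← mul_sum] at htel
  rw [v_succ_eq_sum_add, v_eq_sum_add]
  linear_combination htel + vCert_self_add_boundary n + 8 * mul_v_pred_eq_sum n

/-- The recurrence (8) satisfied by `v_n`. -/
theorem v_recurrence (n : ℕ) (hn : 1 ≤ n) :
    8 * ((n : ℚ) + 1) ^ 3 * v (n + 1)
      - (2 * (n : ℚ) + 1) * (8 * (n : ℚ) ^ 2 + 8 * (n : ℚ) + 5) * v n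
      + 8 * (n : ℚ) ^ 3 * v (n - 1) = 0 :=
  v_recurrence_general n
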